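/- For every weakly connected subdigraph F' of a maximal octus F, there exists a maximal octus F̄ such that F' is a spanning subdigraph of F̄ (i.e., V(F') = V(F̄) and A(F') ⊆ A(F̄)). -/

import Mathlib

/-- A digraph on a vertex type `V`: a set of arcs given by an adjacency relation. -/
structure Digraph' (V : Type) where
  Adj : V → V → Prop

namespace Digraph'

variable {V : Type}

/-- A digraph is loopless if it has no arc from a vertex to itself. -/
def Loopless (D : Digraph' V) : Prop := ∀ v, ¬ D.Adj v v

/-- A set `S` of vertices is acyclic in `D` if the subdigraph induced by `S`
contains no directed cycle (equivalently, no vertex can reach itself by a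
nontrivial directed walk staying inside `S`). -/
def AcyclicOn (D : Digraph' V) (S : Set V) : Prop :=
  ∀ v, ¬ Relation.TransGen (fun x y => x ∈ S ∧ y ∈ S ∧ D.Adj x y) v v

/-- An acyclic coloring of `D` with `k` colors: every color class induces an
acyclic subdigraph. -/
def IsAcyclicColoring (D : Digraph' V) {k : ℕ} (c : V → Fin k) : Prop :=
  ∀ i : Fin k, D.AcyclicOn {v | c v = i}

/-- The dichromatic number of `D`: the least `k` such that `D` admits an
acyclic coloring with `k` colors. -/
noncomputable def dichromaticNumber (D : Digraph' V) : ℕ :=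
  sInf {k : ℕ | ∃ c : V → Fin k, D.IsAcyclicColoring c}

/-- `D.IsDipath u l v`: the list `u :: l ++ [v]` is a directed path in `D`
from `u` to `v`, with (pairwise distinct) internal vertices `l`. -/
def IsDipath (D : Digraph' V) (u : V) (l : List V) (v : V) : Prop :=
  (u :: l ++ [v]).Chain' D.Adj ∧ (u :: l ++ [v]).Nodup

/-- `D.ContainsSubdivision F`: some subdigraph of `D` is a subdivision of `F`.
Concretely, there is an injective map `β` of the vertices of `F` into `D`
(the branch vertices), and for every arc `(a,b)` of `F` a directed path in
`D` from `β a` to `β b`, such that the internal vertices of these paths avoid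
all branch vertices and the paths of distinct arcs are internally disjoint. -/
def ContainsSubdivision {α : Type} (D : Digraph' V) (F : Digraph' α) : Prop :=
  ∃ (β : α → V) (p : ∀ a b, F.Adj a b → List V),
    Function.Injective β ∧
    (∀ a b (h : F.Adj a b), D.IsDipath (β a) (p a b h) (β b)) ∧
    (∀ a b (h : F.Adj a b) (x : V), x ∈ p a b h → x ∉ Set.range β) ∧
    (∀ a b (h : F.Adj a b) (a' b' : α) (h' : F.Adj a' b'),
      (a, b) ≠ (a', b') → ∀ x, x ∈ p a b h → x ∉ p a' b' h')

/-- `MaderBound F k`: every (finite, loopless) digraph with dichromatic number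
at least `k` contains a subdivision of `F`. -/
def MaderBound {α : Type} (F : Digraph' α) (k : ℕ) : Prop :=
  ∀ (n : ℕ) (D : Digraph' (Fin n)), D.Loopless →
    k ≤ D.dichromaticNumber → D.ContainsSubdivision F

/-- The dichromatic Mader number of `F`: the smallest integer `k ≥ 1` such that
every digraph with dichromatic number at least `k` contains a subdivision of `F`. -/
noncomputable def mader {α : Type} (F : Digraph' α) : ℕ :=
  sInf {k : ℕ | 1 ≤ k ∧ MaderBound F k}

/-- A digraph is strongly connected if every vertex can reach every other
vertex by a directed path. -/
def StronglyConnected (D : Digraph' V) : Prop :=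
  ∀ x y : V, Relation.ReflTransGen D.Adj x y

/-- The subdigraph of `D` induced by a set `S` of vertices. -/
def induce (D : Digraph' V) (S : Set V) : Digraph' S :=
  ⟨fun a b => D.Adj a.1 b.1⟩

end Digraph'

/-- `D` is an orientation of the undirected simple graph `G`: the arcs of `D`
are obtained by choosing exactly one direction for each edge of `G`. -/
def IsOrientationOf {γ : Type} (D : Digraph' γ) (G : SimpleGraph γ) : Prop :=
  (∀ a b, D.Adj a b → G.Adj a b) ∧
  (∀ a b, G.Adj a b → ((D.Adj a b ∨ D.Adj b a) ∧ ¬ (D.Adj a b ∧ D.Adj b a)))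


/-- The arc set `E` is an orientation of the undirected path whose vertex
sequence is the (nodup) list `l`: for each pair of consecutive vertices of `l`,
exactly one of the two possible arcs belongs to `E`, and `E` contains nothing else. -/
def IsPathOrientation (l : List ℕ) (E : Finset (ℕ × ℕ)) : Prop :=
  (∀ e ∈ E, e ∈ l.zip l.tail ∨ e.swap ∈ l.zip l.tail) ∧
  (∀ p ∈ l.zip l.tail, (p ∈ E ∨ p.swap ∈ E) ∧ ¬ (p ∈ E ∧ p.swap ∈ E))

/-- The class of octi, as digraphs presented by a finite vertex set `Vs ⊆ ℕ`
together with a finite arc set `As`: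
* the single vertex `K₁` is an octus;
* ear addition: given an octus `F`, a vertex `v₀` of `F` and an orientation of
  a path `v₁, …, v_k` (`k ≥ 1`, given by the nonempty nodup list `l` disjoint
  from `F`, with arc set `E`), adding the path, both arcs `(v₀,v₁)`, `(v₁,v₀)`
  and exactly one of the arcs `(v₀,v_k)`, `(v_k,v₀)` yields an octus;
* every subdigraph of an octus is an octus. -/
inductive IsOctus : Finset ℕ → Finset (ℕ × ℕ) → Prop
  | single (v : ℕ) : IsOctus {v} ∅
  | ear (Vs : Finset ℕ) (As : Finset (ℕ × ℕ)) (v0 : ℕ) (l : List ℕ)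
      (E : Finset (ℕ × ℕ)) (e : ℕ × ℕ)
      (hoct : IsOctus Vs As) (hv0 : v0 ∈ Vs)
      (hne : l ≠ []) (hnd : l.Nodup) (hdisj : ∀ x ∈ l, x ∉ Vs)
      (hE : IsPathOrientation l E)
      (he : e = (v0, l.getLast hne) ∨ e = (l.getLast hne, v0)) :
      IsOctus (Vs ∪ l.toFinset)
        (As ∪ E ∪ {(v0, l.head hne), (l.head hne, v0), e})
  | subdigraph (Vs As Vs' As') (hoct : IsOctus Vs As) (hV : Vs' ⊆ Vs) (hA : As' ⊆ As)
      (hsupp : ∀ a ∈ As', a.1 ∈ Vs' ∧ a.2 ∈ Vs') : IsOctus Vs' As'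

/-- A maximal octus: a digraph obtainable from `K₁` by ear additions only. -/
inductive IsMaximalOctus : Finset ℕ → Finset (ℕ × ℕ) → Prop
  | single (v : ℕ) : IsMaximalOctus {v} ∅
  | ear (Vs : Finset ℕ) (As : Finset (ℕ × ℕ)) (v0 : ℕ) (l : List ℕ)
      (E : Finset (ℕ × ℕ)) (e : ℕ × ℕ)
      (hoct : IsMaximalOctus Vs As) (hv0 : v0 ∈ Vs)
      (hne : l ≠ []) (hnd : l.Nodup) (hdisj : ∀ x ∈ l, x ∉ Vs)
      (hE : IsPathOrientation l E)
      (he : e = (v0, l.getLast hne) ∨ e = (l.getLast hne, v0)) :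
      IsMaximalOctus (Vs ∪ l.toFinset)
        (As ∪ E ∪ {(v0, l.head hne), (l.head hne, v0), e})

/-- The digraph (on the vertex subtype `{x // x ∈ Vs}`) presented by the
vertex set `Vs` and the arc set `As`. -/
def toDigraph (Vs : Finset ℕ) (As : Finset (ℕ × ℕ)) : Digraph' {x : ℕ // x ∈ Vs} :=
  ⟨fun a b => ((a : ℕ), (b : ℕ)) ∈ As⟩
/-- The digraph presented by `(Vs, As)` is weakly connected: any two of its
vertices are joined by a path in the underlying undirected graph. -/
def WeaklyConnectedOn (Vs : Finset ℕ) (As : Finset (ℕ × ℕ)) : Prop :=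
  ∀ x ∈ Vs, ∀ y ∈ Vs, Relation.ReflTransGen (fun a b => (a, b) ∈ As ∨ (b, a) ∈ As) x y




namespace OctusAux

/-- consecutive pairs of a list -/
def pr (m : List ℕ) : List (ℕ × ℕ) := m.zip m.tail

lemma pr_nil : pr [] = [] := rfl
lemma pr_single (a : ℕ) : pr [a] = [] := rfl
lemma pr_cons (a b : ℕ) (t : List ℕ) : pr (a :: b :: t) = (a, b) :: pr (b :: t) := rfl

lemma mem_pr_iff {m : List ℕ} {p : ℕ × ℕ} :
    p ∈ pr m ↔ ∃ u v, m = u ++ p.1 :: p.2 :: v := by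
  induction m with
  | nil =>
    simp only [pr_nil, List.not_mem_nil, false_iff]
    rintro ⟨u, v, h⟩
    exact absurd h.symm (by simp)
  | cons a t ih =>
    cases t with
    | nil =>
      simp only [pr_single, List.not_mem_nil, false_iff]
      rintro ⟨u, v, h⟩
      rcases u with _ | ⟨x, u⟩ <;> simp at h
    | cons b s =>
      rw [pr_cons]
      constructor
      · intro h
        rcases List.mem_cons.1 h with h | h
        · exact ⟨[], s, by subst h; simp⟩
        · obtain ⟨u, v, huv⟩ := ih.1 h
          exact ⟨a :: u, v, by simp [huv]⟩
      · rintro ⟨u, v, huv⟩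
        rcases u with _ | ⟨x, u⟩
        · simp only [List.nil_append, List.cons.injEq] at huv
          exact List.mem_cons.2 (Or.inl (by rw [Prod.ext_iff]; exact ⟨huv.1.symm, (huv.2.1).symm⟩))
        · simp only [List.cons_append, List.cons.injEq] at huv
          exact List.mem_cons.2 (Or.inr (ih.2 ⟨u, v, huv.2⟩))

lemma mem_of_mem_pr {m : List ℕ} {p : ℕ × ℕ} (h : p ∈ pr m) : p.1 ∈ m ∧ p.2 ∈ m := by
  obtain ⟨u, v, huv⟩ := mem_pr_iff.1 h
  subst huv; constructor <;> simp

lemma ne_of_mem_pr {m : List ℕ} {p : ℕ × ℕ} (h : p ∈ pr m) (hnd : m.Nodup) : p.1 ≠ p.2 := by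
  obtain ⟨u, v, huv⟩ := mem_pr_iff.1 h
  subst huv
  have h2 : (p.1 :: p.2 :: v).Nodup := (List.nodup_append.1 hnd).2.1
  intro he
  exact (List.nodup_cons.1 h2).1 (he ▸ List.mem_cons_self)

lemma pr_append_left {m C : List ℕ} {p : ℕ × ℕ} (h : p ∈ pr m) : p ∈ pr (C ++ m) := by
  obtain ⟨u, v, huv⟩ := mem_pr_iff.1 h
  exact mem_pr_iff.2 ⟨C ++ u, v, by simp [huv]⟩

lemma pr_append_right {m C : List ℕ} {p : ℕ × ℕ} (h : p ∈ pr m) : p ∈ pr (m ++ C) := by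
  obtain ⟨u, v, huv⟩ := mem_pr_iff.1 h
  exact mem_pr_iff.2 ⟨u, v ++ C, by simp [huv]⟩

lemma pr_reverse {m : List ℕ} {p : ℕ × ℕ} : p ∈ pr m.reverse ↔ p.swap ∈ pr m := by
  constructor
  · intro h
    obtain ⟨u, v, huv⟩ := mem_pr_iff.1 h
    refine mem_pr_iff.2 ⟨v.reverse, u.reverse, ?_⟩
    have := congrArg List.reverse huv
    simpa using this
  · intro h
    obtain ⟨u, v, huv⟩ := mem_pr_iff.1 h
    refine mem_pr_iff.2 ⟨v.reverse, u.reverse, ?_⟩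
    have := congrArg List.reverse huv
    simpa using this

lemma pr_append {A B : List ℕ} {p : ℕ × ℕ} (h : p ∈ pr (A ++ B)) :
    p ∈ pr A ∨ p ∈ pr B ∨ ∃ (hA : A ≠ []) (hB : B ≠ []), p = (A.getLast hA, B.head hB) := by
  induction A with
  | nil => simp at h; exact Or.inr (Or.inl h)
  | cons a t ih =>
    cases t with
    | nil =>
      cases B with
      | nil => simp at h; exact Or.inl h
      | cons b s =>
        simp only [List.singleton_append, pr_cons] at h
        rcases List.mem_cons.1 h with h | h
        · exact Or.inr (Or.inr ⟨by simp, by simp, by simp [h]⟩)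
        · exact Or.inr (Or.inl h)
    | cons a' t' =>
      rw [List.cons_append, List.cons_append, pr_cons] at h
      rcases List.mem_cons.1 h with h | h
      · exact Or.inl (by rw [pr_cons]; exact List.mem_cons.2 (Or.inl h))
      · rcases ih h with h | h | ⟨hA, hB, he⟩
        · exact Or.inl (by rw [pr_cons]; exact List.mem_cons.2 (Or.inr h))
        · exact Or.inr (Or.inl h)
        · exact Or.inr (Or.inr ⟨by simp, hB, by simpa using he⟩)

/-- every non-head element of a list is the second coordinate of a consecutive pair -/
lemma exists_pred {m : List ℕ} {x : ℕ} (hx : x ∈ m) (hne : m ≠ [])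
    (hh : x ≠ m.head hne) : ∃ y, (y, x) ∈ pr m := by
  induction m with
  | nil => exact absurd hx (by simp)
  | cons a t ih =>
    simp only [List.head_cons] at hh
    have hxt : x ∈ t := by rcases List.mem_cons.1 hx with h | h; exact absurd h hh; exact h
    cases t with
    | nil => exact absurd hxt (by simp)
    | cons b s =>
      by_cases hb : x = b
      · exact ⟨a, by rw [pr_cons, hb]; exact List.mem_cons.2 (Or.inl rfl)⟩
      · obtain ⟨y, hy⟩ := ih hxt (by simp) (by simpa using hb)
        exact ⟨y, by rw [pr_cons]; exact List.mem_cons.2 (Or.inr hy)⟩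



def relOf (B : Finset (ℕ × ℕ)) : ℕ → ℕ → Prop := fun a b => (a, b) ∈ B ∨ (b, a) ∈ B

/-- an edge of `m` touching the head of `m` must be the first edge -/
lemma head_touch {v0 : ℕ} {t : List ℕ} {p : ℕ × ℕ}
    (hnd : (v0 :: t).Nodup)
    (hp : p ∈ pr (v0 :: t) ∨ p.swap ∈ pr (v0 :: t))
    (htouch : p.1 = v0 ∨ p.2 = v0) :
    ∃ (h : t ≠ []), p = (v0, t.head h) ∨ p = (t.head h, v0) := by
  have hv0t : v0 ∉ t := (List.nodup_cons.1 hnd).1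
  cases t with
  | nil => rcases hp with h | h <;> simp [pr_single] at h
  | cons b s =>
    refine ⟨by simp, ?_⟩
    simp only [List.head_cons]
    rw [pr_cons] at hp
    rcases hp with h | h
    · rcases List.mem_cons.1 h with h | h
      · exact Or.inl h
      · have := mem_of_mem_pr h
        rcases htouch with h1 | h1 <;> rw [h1] at this <;>
          exact absurd (by tauto) hv0t
    · rcases List.mem_cons.1 h with h | h
      · exact Or.inr (by rw [Prod.ext_iff] at h ⊢; exact ⟨h.2, h.1⟩)
      · have := mem_of_mem_pr h
        simp only [Prod.fst_swap, Prod.snd_swap] at this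
        rcases htouch with h1 | h1 <;> rw [h1] at this <;>
          exact absurd (by tauto) hv0t

/-- an edge of `m' ++ [z]` touching `z` must be the last edge -/
lemma last_touch {z : ℕ} {m' : List ℕ} {p : ℕ × ℕ}
    (hnd : (m' ++ [z]).Nodup) (hm' : m' ≠ [])
    (hp : p ∈ pr (m' ++ [z]) ∨ p.swap ∈ pr (m' ++ [z]))
    (htouch : p.1 = z ∨ p.2 = z) :
    p = (m'.getLast hm', z) ∨ p = (z, m'.getLast hm') := by
  have hrev : p ∈ pr (z :: m'.reverse) ∨ p.swap ∈ pr (z :: m'.reverse) := by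
    have he : (m' ++ [z]).reverse = z :: m'.reverse := by simp
    rcases hp with h | h
    · exact Or.inr (by rw [← he]; exact pr_reverse.2 (by simpa using h))
    · exact Or.inl (by rw [← he]; exact pr_reverse.2 h)
  have hnd' : (z :: m'.reverse).Nodup := by
    have : (m' ++ [z]).reverse.Nodup := List.nodup_reverse.2 hnd
    simpa using this
  obtain ⟨h, hc⟩ := head_touch hnd' hrev htouch
  have hh : m'.reverse.head h = m'.getLast hm' := List.head_reverse _
  rcases hc with hc | hc
  · exact Or.inr (by rw [hc, hh])
  · exact Or.inl (by rw [hc, hh])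

/-- an edge of `m' ++ [z]` avoiding `z` is an edge of `m'` -/
lemma drop_last_edge {z : ℕ} {m' : List ℕ} {p : ℕ × ℕ}
    (hp : p ∈ pr (m' ++ [z]) ∨ p.swap ∈ pr (m' ++ [z]))
    (h1 : p.1 ≠ z) (h2 : p.2 ≠ z) :
    p ∈ pr m' ∨ p.swap ∈ pr m' := by
  rcases hp with h | h
  · rcases pr_append h with h | h | ⟨hA, hB, he⟩
    · exact Or.inl h
    · simp [pr_single] at h
    · exact absurd (congrArg Prod.snd he) (by simpa using h2)
  · rcases pr_append h with h | h | ⟨hA, hB, he⟩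
    · exact Or.inr h
    · simp [pr_single] at h
    · exact absurd (congrArg Prod.snd he) (by simpa [Prod.swap] using h1)

lemma relOf_mono {B C : Finset (ℕ × ℕ)} (h : B ⊆ C) {x y : ℕ}
    (hxy : Relation.ReflTransGen (relOf B) x y) : Relation.ReflTransGen (relOf C) x y :=
  Relation.ReflTransGen.mono (fun _ _ hr => Or.imp (fun hh => h hh) (fun hh => h hh) hr) _ _ hxy

lemma exists_arc_of_ne {B : Finset (ℕ × ℕ)} {x y : ℕ} (hxy : Relation.ReflTransGen (relOf B) x y)
    (hne : x ≠ y) : ∃ b ∈ B, b.1 = x ∨ b.2 = x := by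
  rcases hxy.cases_head with h | ⟨c, hc, _⟩
  · exact absurd h hne
  · rcases hc with h | h
    · exact ⟨(x, c), h, Or.inl rfl⟩
    · exact ⟨(c, x), h, Or.inr rfl⟩

/-- shortcut walks around a vertex `w` whose only possible neighbour is `h` -/
lemma rtg_avoid {B : Finset (ℕ × ℕ)} {w h : ℕ} (hw : h ≠ w)
    (hB : ∀ b ∈ B, (b.1 = w ∨ b.2 = w) → b = (w, h) ∨ b = (h, w)) {x y : ℕ}
    (hxy : Relation.ReflTransGen (relOf B) x y) (hx : x ≠ w) (hy : y ≠ w) :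
    Relation.ReflTransGen (relOf (B.filter fun b => b.1 ≠ w ∧ b.2 ≠ w)) x y := by
  set f : ℕ → ℕ := fun x => if x = w then h else x with hf
  have key : ∀ u v, Relation.ReflTransGen (relOf B) u v →
      Relation.ReflTransGen (relOf (B.filter fun b => b.1 ≠ w ∧ b.2 ≠ w)) (f u) (f v) := by
    intro u v huv
    induction huv with
    | refl => exact .refl
    | tail _ hstep ih =>
      rename_i b c _
      by_cases htouch : b = w ∨ c = w
      · have hbc : (b = w ∧ c = h) ∨ (b = h ∧ c = w) := by
          rcases hstep with hs | hs
          · rcases hB _ hs htouch with he | he <;>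
              simp only [Prod.mk.injEq] at he <;> tauto
          · rcases hB _ hs htouch.symm with he | he <;>
              simp only [Prod.mk.injEq] at he <;> tauto
        have hfeq : f b = f c := by
          rcases hbc with ⟨h1, h2⟩ | ⟨h1, h2⟩ <;> subst h1 <;> subst h2 <;>
            simp [hf, hw]
        rw [← hfeq]; exact ih
      · push_neg at htouch
        refine ih.tail ?_
        have hfb : f b = b := by simp [hf, htouch.1]
        have hfc : f c = c := by simp [hf, htouch.2]
        rw [hfb, hfc]
        rcases hstep with hs | hs
        · exact Or.inl (Finset.mem_filter.2 ⟨hs, htouch.1, htouch.2⟩)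
        · exact Or.inr (Finset.mem_filter.2 ⟨hs, htouch.2, htouch.1⟩)
  have := key x y hxy
  rwa [show f x = x by simp [hf, hx], show f y = y by simp [hf, hy]] at this

/-- a walk between two `S1`-vertices can be taken inside `S1` when `S1 ∩ S2 ⊆ {v0}` -/
lemma rtg_cross {B : Finset (ℕ × ℕ)} {S1 S2 : Finset ℕ} {v0 : ℕ}
    (hB : ∀ b ∈ B, (b.1 ∈ S1 ∧ b.2 ∈ S1) ∨ (b.1 ∈ S2 ∧ b.2 ∈ S2))
    (hI : ∀ x, x ∈ S1 → x ∈ S2 → x = v0) (hv : v0 ∈ S1) {x y : ℕ}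
    (hxy : Relation.ReflTransGen (relOf B) x y) (hy : y ∈ S1) :
    (x ∈ S1 → Relation.ReflTransGen (relOf (B.filter fun b => b.1 ∈ S1 ∧ b.2 ∈ S1)) x y) ∧
    (x ∈ S2 → Relation.ReflTransGen (relOf (B.filter fun b => b.1 ∈ S1 ∧ b.2 ∈ S1)) v0 y) := by
  induction hxy using Relation.ReflTransGen.head_induction_on with
  | refl =>
    exact ⟨fun _ => .refl, fun h2 => by rw [hI y hy h2]⟩
  | head hstep _ ih =>
    rename_i a b _
    have hcase : (a ∈ S1 ∧ b ∈ S1) ∨ (a ∈ S2 ∧ b ∈ S2) := by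
      rcases hstep with hs | hs <;> rcases hB _ hs with h | h <;> simp at h <;> tauto
    constructor
    · intro ha
      rcases hcase with ⟨ha1, hb1⟩ | ⟨ha2, hb2⟩
      · refine Relation.ReflTransGen.head ?_ (ih.1 hb1)
        rcases hstep with hs | hs
        · exact Or.inl (Finset.mem_filter.2 ⟨hs, ha1, hb1⟩)
        · exact Or.inr (Finset.mem_filter.2 ⟨hs, hb1, ha1⟩)
      · have := hI a ha ha2
        rw [this] at *
        exact ih.2 hb2
    · intro ha
      rcases hcase with ⟨ha1, hb1⟩ | ⟨ha2, hb2⟩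
      · have hav : a = v0 := hI a ha1 ha
        refine Relation.ReflTransGen.head ?_ (ih.1 hb1)
        rw [← hav]
        rcases hstep with hs | hs
        · exact Or.inl (Finset.mem_filter.2 ⟨hs, ha1, hb1⟩)
        · exact Or.inr (Finset.mem_filter.2 ⟨hs, hb1, ha1⟩)
      · exact ih.2 hb2

/-- start and end of a walk are separated when the arc set splits into two disjoint parts -/
lemma rtg_sep {B : Finset (ℕ × ℕ)} {S1 S2 : Finset ℕ}
    (hB : ∀ b ∈ B, (b.1 ∈ S1 ∧ b.2 ∈ S1) ∨ (b.1 ∈ S2 ∧ b.2 ∈ S2))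
    (hI : ∀ x, x ∈ S1 → x ∈ S2 → False) {x y : ℕ}
    (hxy : Relation.ReflTransGen (relOf B) x y) (hx : x ∈ S1) : y ∈ S1 := by
  induction hxy using Relation.ReflTransGen.head_induction_on with
  | refl => exact hx
  | head hstep _ ih =>
    rename_i a b _
    have hcase : (a ∈ S1 ∧ b ∈ S1) ∨ (a ∈ S2 ∧ b ∈ S2) := by
      rcases hstep with hs | hs <;> rcases hB _ hs with h | h <;> simp at h <;> tauto
    rcases hcase with ⟨_, hb⟩ | ⟨ha, _⟩
    · exact ih hb
    · exact absurd (hI a hx ha) id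

end OctusAux
open OctusAux

lemma pr_eq_zip (l : List ℕ) : l.zip l.tail = pr l := rfl

lemma octus_arcs_wf {Vs : Finset ℕ} {As : Finset (ℕ × ℕ)} (h : IsMaximalOctus Vs As) :
    ∀ a ∈ As, a.1 ∈ Vs ∧ a.2 ∈ Vs ∧ a.1 ≠ a.2 := by
  induction h with
  | single v => simp
  | ear Vs As v0 l E e hoct hv0 hne hnd hdisj hE he ih =>
    intro a ha
    have hl : ∀ x ∈ l, x ∈ Vs ∪ l.toFinset := fun x hx => by
      simp [List.mem_toFinset.2 hx]
    have hv0' : v0 ∈ Vs ∪ l.toFinset := Finset.mem_union_left _ hv0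
    have hv0l : v0 ∉ l := fun hc => hdisj _ hc hv0
    have hhead : l.head hne ∈ l := List.head_mem hne
    have hlast : l.getLast hne ∈ l := List.getLast_mem hne
    simp only [Finset.mem_union, Finset.mem_insert, Finset.mem_singleton] at ha
    rcases ha with (ha | ha) | ha
    · rcases ih a ha with ⟨h1, h2, h3⟩
      exact ⟨Finset.mem_union_left _ h1, Finset.mem_union_left _ h2, h3⟩
    · have hedge : a ∈ pr l ∨ a.swap ∈ pr l := (hE.1 a ha).imp id id
      have hmem : a.1 ∈ l ∧ a.2 ∈ l := by
        rcases hedge with h | h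
        · exact mem_of_mem_pr h
        · have := mem_of_mem_pr h; simpa [and_comm] using this
      refine ⟨hl _ hmem.1, hl _ hmem.2, ?_⟩
      rcases hedge with h | h
      · exact ne_of_mem_pr h hnd
      · exact fun hc => (ne_of_mem_pr h hnd) (by simp [hc])
    · rcases ha with ha | ha | ha
      · subst ha
        exact ⟨hv0', hl _ hhead, fun hc => hv0l ((show v0 = l.head hne from hc) ▸ hhead)⟩
      · subst ha
        exact ⟨hl _ hhead, hv0', fun hc =>
          hv0l ((show l.head hne = v0 from hc).symm ▸ hhead)⟩
      · rcases he with he | he <;> subst he <;> subst ha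
        · exact ⟨hv0', hl _ hlast, fun hc => hv0l ((show v0 = l.getLast hne from hc) ▸ hlast)⟩
        · exact ⟨hl _ hlast, hv0', fun hc =>
            hv0l ((show l.getLast hne = v0 from hc).symm ▸ hlast)⟩

/-- key lemma: a connected subdigraph of an oriented path, containing the head `v0`
of the path, can be glued onto any maximal octus containing `v0`. -/
lemma pathOne : ∀ (n : ℕ) (m : List ℕ), m.length ≤ n → ∀ (v0 : ℕ) (W : Finset ℕ)
    (B : Finset (ℕ × ℕ)) (hm : m ≠ []),
    m.head hm = v0 → m.Nodup →
    (∀ b ∈ B, b ∈ pr m ∨ b.swap ∈ pr m) →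
    (∀ b ∈ B, b.1 ∈ W ∧ b.2 ∈ W) →
    v0 ∈ W → (∀ x ∈ W, x ∈ m) →
    (∀ x ∈ W, ∀ y ∈ W, Relation.ReflTransGen (relOf B) x y) →
    ∀ (MV : Finset ℕ) (MA : Finset (ℕ × ℕ)), IsMaximalOctus MV MA → v0 ∈ MV →
    (∀ x ∈ m.tail, x ∉ MV) →
    ∃ B'', B ⊆ B'' ∧ IsMaximalOctus (MV ∪ W.erase v0) (MA ∪ B'') := by
  intro n
  induction n with
  | zero => intro m hlen; intro _ _ _ hm; exact absurd (List.length_eq_zero_iff.1 (Nat.le_zero.1 hlen)) hm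
  | succ n ih =>
    intro m hlen v0 W B hm hhead hnd hB hsupp hv0W hWm hconn MV MA hoct hv0MV hMV
    by_cases hsing : m.length = 1
    · -- m = [v0], so B = ∅ and W = {v0}
      obtain ⟨a, ha⟩ := List.length_eq_one_iff.1 hsing
      subst ha
      have hav : a = v0 := hhead
      have hBe : B = ∅ := by
        rcases Finset.eq_empty_or_nonempty B with h | ⟨b, hb⟩
        · exact h
        · rcases hB b hb with h | h <;> simp [pr_single] at h
      have hWe : W.erase v0 = ∅ := by
        rw [Finset.eq_empty_iff_forall_notMem]
        intro x hx
        have hxa : x = a := by simpa using hWm x (Finset.mem_of_mem_erase hx)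
        exact (Finset.ne_of_mem_erase hx) (hxa.trans hav)
      exact ⟨∅, by simp [hBe], by simpa [hWe] using hoct⟩
    · -- m has length ≥ 2; peel the last vertex z
      have h0 : m.length ≠ 0 := fun hc => hm (List.length_eq_zero_iff.1 hc)
      have hlen2 : 2 ≤ m.length := by omega
      set m' := m.dropLast with hm'def
      have hmsplit : m = m' ++ [m.getLast hm] := (List.dropLast_append_getLast hm).symm
      set z := m.getLast hm with hzdef
      have hm'lenq : m'.length = m.length - 1 := by
        rw [hm'def, List.length_dropLast]
      have hm'ne : m' ≠ [] := List.length_pos_iff.1 (by omega)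
      have hm'len : m'.length ≤ n := by omega
      have hnd' : m'.Nodup := hnd.sublist (List.dropLast_sublist m)
      have hndsp : (m' ++ [z]).Nodup := hmsplit ▸ hnd
      have hhead' : m'.head hm'ne = v0 := by
        rw [← hhead]
        exact List.head_dropLast hm'ne
      have hzv0 : z ≠ v0 := by
        intro hc
        have hdisj2 := List.disjoint_of_nodup_append hndsp
        have hv0m' : v0 ∈ m' := by rw [← hhead']; exact List.head_mem hm'ne
        rw [← hc] at hv0m'
        exact hdisj2 hv0m' (by simp)
      have hztail : z ∈ m.tail := by
        rw [hmsplit, List.tail_append_of_ne_nil hm'ne]; simp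
      by_cases hzW : z ∈ W
      · -- peel z as a leaf attached to g := m'.getLast
        set g := m'.getLast hm'ne with hgdef
        have hgz : g ≠ z := by
          have hdisj2 := List.disjoint_of_nodup_append hndsp
          intro hc
          exact hdisj2 (show z ∈ m' by rw [← hc]; exact List.getLast_mem hm'ne) (by simp)
        have harcz : ∀ b ∈ B, (b.1 = z ∨ b.2 = z) → b = (g, z) ∨ b = (z, g) := by
          intro b hb htouch
          have := last_touch hndsp hm'ne (hmsplit ▸ hB b hb) htouch
          tauto
        have hgW : g ∈ W := by
          obtain ⟨b, hb, hbt⟩ := exists_arc_of_ne (hconn z hzW v0 hv0W) hzv0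
          rcases harcz b hb (by tauto) with he | he <;>
            rcases hsupp b hb with ⟨h1, h2⟩ <;> subst he
          · simpa using h1
          · simpa using h2
        set W' := W.erase z with hW'def
        set B' := B.filter (fun b => b.1 ≠ z ∧ b.2 ≠ z) with hB'def
        have hzB' : ∀ b ∈ B', b ∈ pr m' ∨ b.swap ∈ pr m' := by
          intro b hb
          rw [hB'def, Finset.mem_filter] at hb
          exact drop_last_edge (hmsplit ▸ hB b hb.1) hb.2.1 hb.2.2
        have hres := ih m' hm'len v0 W' B' hm'ne hhead' hnd' hzB'
          (fun b hb => by
            rw [hB'def, Finset.mem_filter] at hb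
            rcases hsupp b hb.1 with ⟨h1, h2⟩
            exact ⟨Finset.mem_erase.2 ⟨hb.2.1, h1⟩, Finset.mem_erase.2 ⟨hb.2.2, h2⟩⟩)
          (Finset.mem_erase.2 ⟨Ne.symm hzv0, hv0W⟩)
          (fun x hx => by
            have hxm := hWm x (Finset.mem_of_mem_erase hx)
            rw [hmsplit] at hxm
            rcases List.mem_append.1 hxm with h | h
            · exact h
            · simp at h; exact absurd h (Finset.ne_of_mem_erase hx))
          (fun x hx y hy => by
            rw [hW'def] at hx hy
            have := hconn x (Finset.mem_of_mem_erase hx) y (Finset.mem_of_mem_erase hy)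
            exact rtg_avoid hgz (fun b hb ht => (harcz b hb ht).symm) this (Finset.ne_of_mem_erase hx)
              (Finset.ne_of_mem_erase hy))
          MV MA hoct hv0MV
          (fun x hx => hMV x (by
            rw [hmsplit, List.tail_append_of_ne_nil hm'ne]
            exact List.mem_append.2 (Or.inl hx)))
        obtain ⟨B'', hB''sub, hB''oct⟩ := hres
        refine ⟨B'' ∪ {(g, z), (z, g)}, ?_, ?_⟩
        · intro b hb
          by_cases htouch : b.1 = z ∨ b.2 = z
          · rcases harcz b hb htouch with he | he <;> subst he <;> simp
          · push_neg at htouch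
            exact Finset.mem_union_left _ (hB''sub (Finset.mem_filter.2 ⟨hb, htouch⟩))
        · have hgmem : g ∈ MV ∪ W'.erase v0 := by
            by_cases hgv : g = v0
            · exact Finset.mem_union_left _ (hgv ▸ hv0MV)
            · exact Finset.mem_union_right _ (Finset.mem_erase.2 ⟨hgv,
                Finset.mem_erase.2 ⟨hgz, hgW⟩⟩)
          have hznotin : z ∉ MV ∪ W'.erase v0 := by
            rw [hW'def]
            simp only [Finset.mem_union, Finset.mem_erase]
            rintro (h | ⟨h1, h2, h3⟩)
            · exact hMV z hztail h
            · exact h2 rfl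
          have hear := IsMaximalOctus.ear (MV ∪ W'.erase v0) (MA ∪ B'') g [z] ∅ (g, z)
            hB''oct hgmem (by simp) (by simp)
            (by intro x hx; simp at hx; subst hx; exact hznotin)
            (by constructor <;> simp [pr_eq_zip, pr_single])
            (Or.inl rfl)
          have hVeq : (MV ∪ W'.erase v0) ∪ [z].toFinset = MV ∪ W.erase v0 := by
            ext x
            simp only [Finset.mem_union, Finset.mem_erase, List.toFinset_cons,
              List.toFinset_nil, LawfulSingleton.insert_empty_eq, Finset.mem_insert, Finset.mem_singleton,
              hW'def]
            constructor
            · rintro ((h | ⟨h1, h2, h3⟩) | h)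
              · exact Or.inl h
              · exact Or.inr ⟨h1, h3⟩
              · subst h; exact Or.inr ⟨hzv0, hzW⟩
            · rintro (h | ⟨h1, h2⟩)
              · exact Or.inl (Or.inl h)
              · by_cases hxz : x = z
                · exact Or.inr hxz
                · exact Or.inl (Or.inr ⟨h1, hxz, h2⟩)
          have hAeq : (MA ∪ B'') ∪ ∅ ∪ {(g, [z].head (by simp)), ([z].head (by simp), g), (g, z)}
              = MA ∪ (B'' ∪ {(g, z), (z, g)}) := by
            ext p
            simp only [List.head_cons, Finset.mem_union, Finset.mem_insert,
              Finset.mem_singleton, Finset.notMem_empty, or_false]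
            tauto
          rw [hVeq, hAeq] at hear
          exact hear
      · -- z ∉ W : drop z and recurse
        have hBm' : ∀ b ∈ B, b ∈ pr m' ∨ b.swap ∈ pr m' := by
          intro b hb
          rcases hsupp b hb with ⟨h1, h2⟩
          exact drop_last_edge (hmsplit ▸ hB b hb)
            (fun hc => hzW (by rw [← hc]; exact h1)) (fun hc => hzW (by rw [← hc]; exact h2))
        exact ih m' hm'len v0 W B hm'ne hhead' hnd' hBm' hsupp hv0W
          (fun x hx => by
            have hxm := hWm x hx
            rw [hmsplit] at hxm
            rcases List.mem_append.1 hxm with h | h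
            · exact h
            · simp at h; exact absurd (h ▸ hx) hzW)
          hconn MV MA hoct hv0MV
          (fun x hx => hMV x (by
            rw [hmsplit, List.tail_append_of_ne_nil hm'ne]
            exact List.mem_append.2 (Or.inl hx)))

/-- gluing a connected subdigraph of an oriented path `Y ++ v0 :: X` (with `v0` inside)
onto a maximal octus containing `v0`. -/
lemma glue2 (X Y : List ℕ) (v0 : ℕ) (hnd : (v0 :: (X ++ Y)).Nodup)
    (W : Finset ℕ) (B : Finset (ℕ × ℕ))
    (hB : ∀ b ∈ B, b ∈ pr (Y ++ v0 :: X) ∨ b.swap ∈ pr (Y ++ v0 :: X))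
    (hloop : ∀ b ∈ B, b.1 ≠ b.2)
    (hsupp : ∀ b ∈ B, b.1 ∈ W ∧ b.2 ∈ W)
    (hv0W : v0 ∈ W) (hW : ∀ x ∈ W, x = v0 ∨ x ∈ X ∨ x ∈ Y)
    (hconn : ∀ x ∈ W, ∀ y ∈ W, Relation.ReflTransGen (relOf B) x y)
    (MV : Finset ℕ) (MA : Finset (ℕ × ℕ)) (hoct : IsMaximalOctus MV MA)
    (hv0MV : v0 ∈ MV) (hMV : ∀ x, (x ∈ X ∨ x ∈ Y) → x ∉ MV) :
    ∃ B'', B ⊆ B'' ∧ IsMaximalOctus (MV ∪ W.erase v0) (MA ∪ B'') := by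
  classical
  have hv0XY : v0 ∉ X ∧ v0 ∉ Y := by
    have := (List.nodup_cons.1 hnd).1
    simp only [List.mem_append] at this
    exact ⟨fun h => this (Or.inl h), fun h => this (Or.inr h)⟩
  have hdisjXY : X.Disjoint Y := List.disjoint_of_nodup_append (List.nodup_cons.1 hnd).2
  set S1 : Finset ℕ := insert v0 X.toFinset with hS1
  set S2 : Finset ℕ := insert v0 Y.toFinset with hS2
  have hI : ∀ x, x ∈ S1 → x ∈ S2 → x = v0 := by
    intro x h1 h2
    rw [hS1, Finset.mem_insert, List.mem_toFinset] at h1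
    rw [hS2, Finset.mem_insert, List.mem_toFinset] at h2
    rcases h1 with h1 | h1
    · exact h1
    · rcases h2 with h2 | h2
      · exact h2
      · exact absurd h2 (hdisjXY h1)
  have hedge : ∀ p : ℕ × ℕ, p ∈ pr (Y ++ v0 :: X) →
      (p.1 ∈ S1 ∧ p.2 ∈ S1) ∨ (p.1 ∈ S2 ∧ p.2 ∈ S2) := by
    intro p hp
    rcases pr_append hp with h | h | ⟨hA, hB2, he⟩
    · right
      have := mem_of_mem_pr h
      constructor <;> rw [hS2, Finset.mem_insert, List.mem_toFinset] <;> tauto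
    · left
      have := mem_of_mem_pr h
      simp only [List.mem_cons] at this
      constructor <;> rw [hS1, Finset.mem_insert, List.mem_toFinset] <;> tauto
    · right
      have h1 : p.1 = Y.getLast hA := congrArg Prod.fst he
      have h2 : p.2 = v0 := by
        have := congrArg Prod.snd he
        simpa using this
      rw [h1, h2]
      constructor
      · rw [hS2, Finset.mem_insert, List.mem_toFinset]
        exact Or.inr (List.getLast_mem hA)
      · simp [hS2]
  have hsplit : ∀ b ∈ B, (b.1 ∈ S1 ∧ b.2 ∈ S1) ∨ (b.1 ∈ S2 ∧ b.2 ∈ S2) := by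
    intro b hb
    rcases hB b hb with h | h
    · exact hedge b h
    · have := hedge b.swap h
      simp only [Prod.fst_swap, Prod.snd_swap] at this
      tauto
  set B1 := B.filter (fun b => b.1 ∈ S1 ∧ b.2 ∈ S1) with hB1
  set B2 := B.filter (fun b => ¬(b.1 ∈ S1 ∧ b.2 ∈ S1)) with hB2
  set W1 := W.filter (· ∈ S1) with hW1
  set W2 := W.filter (· ∈ S2) with hW2
  -- arcs of B1 are edges of v0 :: X
  have hB1edge : ∀ b ∈ B1, b ∈ pr (v0 :: X) ∨ b.swap ∈ pr (v0 :: X) := by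
    intro b hb
    rw [hB1, Finset.mem_filter] at hb
    obtain ⟨hbB, hb1, hb2⟩ := hb
    have hkey : ∀ p : ℕ × ℕ, p ∈ pr (Y ++ v0 :: X) → p.1 ∈ S1 → p.2 ∈ S1 → p.1 ≠ p.2 →
        p ∈ pr (v0 :: X) := by
      intro p hp hp1 hp2 hpne
      rcases pr_append hp with h | h | ⟨hA, hB3, he⟩
      · have hm := mem_of_mem_pr h
        have e1 : p.1 = v0 := hI _ hp1 (by rw [hS2, Finset.mem_insert, List.mem_toFinset]; exact Or.inr hm.1)
        have e2 : p.2 = v0 := hI _ hp2 (by rw [hS2, Finset.mem_insert, List.mem_toFinset]; exact Or.inr hm.2)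
        exact absurd (e1.trans e2.symm) hpne
      · exact h
      · have h1 : p.1 = Y.getLast hA := congrArg Prod.fst he
        have hYmem : p.1 ∈ Y := h1 ▸ List.getLast_mem hA
        have e1 : p.1 = v0 := hI _ hp1 (by rw [hS2, Finset.mem_insert, List.mem_toFinset]; exact Or.inr hYmem)
        exact absurd (e1 ▸ hYmem) hv0XY.2
    rcases hB b hbB with h | h
    · exact Or.inl (hkey b h hb1 hb2 (hloop b hbB))
    · exact Or.inr (hkey b.swap h (by simpa using hb2) (by simpa using hb1)
        (by simpa using (hloop b hbB).symm))
  -- arcs of B2 are edges of v0 :: Y.reverse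
  have hB2in : ∀ b ∈ B2, (b.1 ∈ S2 ∧ b.2 ∈ S2) := by
    intro b hb
    rw [hB2, Finset.mem_filter] at hb
    rcases hsplit b hb.1 with h | h
    · exact absurd h hb.2
    · exact h
  have hB2edge : ∀ b ∈ B2, b ∈ pr (v0 :: Y.reverse) ∨ b.swap ∈ pr (v0 :: Y.reverse) := by
    intro b hb
    have hbB : b ∈ B := by rw [hB2, Finset.mem_filter] at hb; exact hb.1
    have hbnot : ¬(b.1 ∈ S1 ∧ b.2 ∈ S1) := by rw [hB2, Finset.mem_filter] at hb; exact hb.2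
    have hrev : (Y ++ [v0]).reverse = v0 :: Y.reverse := by simp
    have hkey : ∀ p : ℕ × ℕ, p ∈ pr (Y ++ v0 :: X) → ¬(p.1 ∈ S1 ∧ p.2 ∈ S1) →
        p ∈ pr (Y ++ [v0]) := by
      intro p hp hpnot
      rcases pr_append hp with h | h | ⟨hA, hB3, he⟩
      · exact pr_append_right h
      · exfalso
        have hm := mem_of_mem_pr h
        simp only [List.mem_cons] at hm
        refine hpnot ⟨?_, ?_⟩ <;> rw [hS1, Finset.mem_insert, List.mem_toFinset] <;> tauto
      · refine mem_pr_iff.2 ⟨Y.dropLast, [], ?_⟩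
        have h1 : p.1 = Y.getLast hA := congrArg Prod.fst he
        have h2 : p.2 = v0 := by have := congrArg Prod.snd he; simpa using this
        rw [h1, h2]
        conv_lhs => rw [← List.dropLast_append_getLast hA]
        simp
    rcases hB b hbB with h | h
    · exact Or.inr (by
        rw [← hrev]
        exact pr_reverse.2 (hkey b h hbnot))
    · refine Or.inl (by
        rw [← hrev]
        exact pr_reverse.2 (hkey b.swap h (by
          simp only [Prod.fst_swap, Prod.snd_swap]
          exact fun hc => hbnot ⟨hc.2, hc.1⟩)))
  -- supports
  have hsupp1 : ∀ b ∈ B1, b.1 ∈ W1 ∧ b.2 ∈ W1 := by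
    intro b hb
    rw [hB1, Finset.mem_filter] at hb
    obtain ⟨hbB, h1, h2⟩ := hb
    rcases hsupp b hbB with ⟨hw1, hw2⟩
    exact ⟨Finset.mem_filter.2 ⟨hw1, h1⟩, Finset.mem_filter.2 ⟨hw2, h2⟩⟩
  have hsupp2 : ∀ b ∈ B2, b.1 ∈ W2 ∧ b.2 ∈ W2 := by
    intro b hb
    obtain ⟨h1, h2⟩ := hB2in b hb
    have hbB : b ∈ B := by rw [hB2, Finset.mem_filter] at hb; exact hb.1
    rcases hsupp b hbB with ⟨hw1, hw2⟩
    exact ⟨Finset.mem_filter.2 ⟨hw1, h1⟩, Finset.mem_filter.2 ⟨hw2, h2⟩⟩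
  have hv0S1 : v0 ∈ S1 := by simp [hS1]
  have hv0S2 : v0 ∈ S2 := by simp [hS2]
  -- connectivity of the two halves
  have hconn1 : ∀ x ∈ W1, ∀ y ∈ W1, Relation.ReflTransGen (relOf B1) x y := by
    intro x hx y hy
    rw [hW1, Finset.mem_filter] at hx hy
    exact (rtg_cross hsplit hI hv0S1 (hconn x hx.1 y hy.1) hy.2).1 hx.2
  have hIsymm : ∀ x, x ∈ S2 → x ∈ S1 → x = v0 := fun x h1 h2 => hI x h2 h1
  have hconn2 : ∀ x ∈ W2, ∀ y ∈ W2, Relation.ReflTransGen (relOf B2) x y := by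
    intro x hx y hy
    rw [hW2, Finset.mem_filter] at hx hy
    have := (rtg_cross (fun b hb => (hsplit b hb).symm) hIsymm hv0S2
      (hconn x hx.1 y hy.1) hy.2).1 hx.2
    refine relOf_mono ?_ this
    intro b hb
    rw [Finset.mem_filter] at hb
    rw [hB2, Finset.mem_filter]
    refine ⟨hb.1, fun hc => ?_⟩
    have e1 : b.1 = v0 := hI _ hc.1 hb.2.1
    have e2 : b.2 = v0 := hI _ hc.2 hb.2.2
    exact hloop b hb.1 (e1.trans e2.symm)
  -- nodup facts
  have hndX : (v0 :: X).Nodup := by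
    have : (v0 :: X).Sublist (v0 :: (X ++ Y)) :=
      List.Sublist.cons₂ v0 (List.sublist_append_left X Y)
    exact hnd.sublist this
  have hndY : (v0 :: Y.reverse).Nodup := by
    have h1 : (v0 :: Y).Nodup := by
      have : (v0 :: Y).Sublist (v0 :: (X ++ Y)) :=
        List.Sublist.cons₂ v0 (List.sublist_append_right X Y)
      exact hnd.sublist this
    rw [List.nodup_cons] at h1 ⊢
    exact ⟨by simpa using h1.1, by simpa using h1.2⟩
  -- first gluing
  obtain ⟨B1'', hsub1, hoct1⟩ := pathOne (v0 :: X).length (v0 :: X) le_rfl v0 W1 B1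
    (by simp) rfl hndX hB1edge hsupp1
    (Finset.mem_filter.2 ⟨hv0W, hv0S1⟩)
    (fun x hx => by
      rw [hW1, Finset.mem_filter] at hx
      have := hx.2
      rw [hS1, Finset.mem_insert, List.mem_toFinset] at this
      simpa using this)
    hconn1 MV MA hoct hv0MV
    (fun x hx => hMV x (Or.inl (by simpa using hx)))
  -- second gluing
  obtain ⟨B2'', hsub2, hoct2⟩ := pathOne (v0 :: Y.reverse).length (v0 :: Y.reverse) le_rfl v0 W2 B2
    (by simp) rfl hndY hB2edge hsupp2
    (Finset.mem_filter.2 ⟨hv0W, hv0S2⟩)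
    (fun x hx => by
      rw [hW2, Finset.mem_filter] at hx
      have := hx.2
      rw [hS2, Finset.mem_insert, List.mem_toFinset] at this
      simpa using this)
    hconn2 (MV ∪ W1.erase v0) (MA ∪ B1'') hoct1
    (Finset.mem_union_left _ hv0MV)
    (fun x hx => by
      simp only [List.tail_cons, List.mem_reverse] at hx
      simp only [Finset.mem_union]
      rintro (h | h)
      · exact hMV x (Or.inr hx) h
      · have h1 := Finset.mem_of_mem_erase h
        have h2 := Finset.ne_of_mem_erase h
        rw [hW1, Finset.mem_filter, hS1, Finset.mem_insert, List.mem_toFinset] at h1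
        rcases h1.2 with hc | hc
        · exact h2 hc
        · exact hdisjXY hc hx)
  refine ⟨B1'' ∪ B2'', ?_, ?_⟩
  · intro b hb
    by_cases hc : b.1 ∈ S1 ∧ b.2 ∈ S1
    · exact Finset.mem_union_left _ (hsub1 (by rw [hB1, Finset.mem_filter]; exact ⟨hb, hc⟩))
    · exact Finset.mem_union_right _ (hsub2 (by rw [hB2, Finset.mem_filter]; exact ⟨hb, hc⟩))
  · have hVeq : (MV ∪ W1.erase v0) ∪ W2.erase v0 = MV ∪ W.erase v0 := by
      ext x
      simp only [Finset.mem_union, Finset.mem_erase, hW1, hW2, Finset.mem_filter]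
      constructor
      · rintro ((h | ⟨h1, h2, h3⟩) | ⟨h1, h2, h3⟩)
        · exact Or.inl h
        · exact Or.inr ⟨h1, h2⟩
        · exact Or.inr ⟨h1, h2⟩
      · rintro (h | ⟨h1, h2⟩)
        · exact Or.inl (Or.inl h)
        · rcases hW x h2 with hc | hc | hc
          · exact absurd hc h1
          · exact Or.inl (Or.inr ⟨h1, h2, by rw [hS1, Finset.mem_insert, List.mem_toFinset]; exact Or.inr hc⟩)
          · exact Or.inr ⟨h1, h2, by rw [hS2, Finset.mem_insert, List.mem_toFinset]; exact Or.inr hc⟩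
    have hAeq : (MA ∪ B1'') ∪ B2'' = MA ∪ (B1'' ∪ B2'') := Finset.union_assoc _ _ _
    rw [hVeq, hAeq] at hoct2
    exact hoct2

lemma getLast_eq' {a b : List ℕ} (h : a = b) (ha : a ≠ []) (hb : b ≠ []) :
    a.getLast ha = b.getLast hb := by subst h; rfl

lemma head_eq' {a b : List ℕ} (h : a = b) (ha : a ≠ []) (hb : b ≠ []) :
    a.head ha = b.head hb := by subst h; rfl

lemma getLast_append_singleton' (u : List ℕ) (a : ℕ) :
    (u ++ [a]).getLast (by simp) = a := by
  simp [List.getLast_append]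

set_option maxHeartbeats 2000000 in
/-- For every weakly connected subdigraph `F'` of a maximal
octus `F`, there exists a maximal octus `F̄` such that `F'` is a spanning
subdigraph of `F̄`. -/
theorem connected_sub_of_maximal_octus (Vs As Vs' As' : _)
    (h : IsMaximalOctus Vs As) (hV : Vs' ⊆ Vs) (hA : As' ⊆ As)
    (hsupp : ∀ a ∈ As', a.1 ∈ Vs' ∧ a.2 ∈ Vs')
    (hne : Vs'.Nonempty) (hconn : WeaklyConnectedOn Vs' As') :
    ∃ As'' : Finset (ℕ × ℕ), As' ⊆ As'' ∧ IsMaximalOctus Vs' As'' := by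
  classical
  induction h generalizing Vs' As' with
  | single v =>
    have hVe : Vs' = {v} := by
      rcases Finset.subset_singleton_iff.1 hV with h | h
      · exact absurd h (Finset.nonempty_iff_ne_empty.1 hne)
      · exact h
    have hAe : As' = ∅ := Finset.subset_empty.1 hA
    exact ⟨∅, by simp [hAe], hVe ▸ IsMaximalOctus.single v⟩
  | ear Vs As v0 l E e hoct hv0 hlne hnd hdisj hE he ih =>
    -- names: hlne : l ≠ [], hnd : l.Nodup, hdisj, hE, he
    set hd := l.head hlne with hhd_def
    have hbig : IsMaximalOctus (Vs ∪ l.toFinset)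
        (As ∪ E ∪ {(v0, hd), (hd, v0), e}) :=
      IsMaximalOctus.ear Vs As v0 l E e hoct hv0 hlne hnd hdisj hE he
    have hwfbig := octus_arcs_wf hbig
    have hwfold := octus_arcs_wf hoct
    have hv0l : v0 ∉ l := fun hc => hdisj _ hc hv0
    have hhd : hd ∈ l := List.head_mem hlne
    have hlast : l.getLast hlne ∈ l := List.getLast_mem hlne
    have hndc : (v0 :: l).Nodup := List.nodup_cons.2 ⟨hv0l, hnd⟩
    have hEl : ∀ p ∈ E, p.1 ∈ l ∧ p.2 ∈ l := by
      intro p hp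
      rcases hE.1 p hp with h | h
      · exact mem_of_mem_pr (pr_eq_zip l ▸ h)
      · have := mem_of_mem_pr (pr_eq_zip l ▸ h)
        simpa [and_comm] using this
    -- classification of the arcs of As'
    have hclass : ∀ a ∈ As', a ∈ As ∨ (a ∈ E ∨ a = (v0, hd) ∨ a = (hd, v0) ∨ a = e) := by
      intro a ha
      have := hA ha
      simp only [Finset.mem_union, Finset.mem_insert, Finset.mem_singleton] at this
      tauto
    have hloopAs' : ∀ a ∈ As', a.1 ≠ a.2 := fun a ha => (hwfbig a (hA ha)).2.2
    have hspec_end : ∀ a ∈ As', a ∉ As → ((a.1 = v0 ∨ a.1 ∈ l) ∧ (a.2 = v0 ∨ a.2 ∈ l)) := by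
      intro a ha hnotAs
      rcases hclass a ha with h | h
      · exact absurd h hnotAs
      · rcases h with h | h | h | h
        · have := hEl a h; tauto
        · subst h; exact ⟨Or.inl rfl, Or.inr hhd⟩
        · subst h; exact ⟨Or.inr hhd, Or.inl rfl⟩
        · subst h
          rcases he with he' | he' <;> subst he'
          · exact ⟨Or.inl rfl, Or.inr hlast⟩
          · exact ⟨Or.inr hlast, Or.inl rfl⟩
    by_cases hCaseA : ∀ x ∈ Vs', x ∉ l
    · -- case A : the subdigraph lies in the old octus
      have hA'sub : As' ⊆ As := by
        intro a ha
        by_contra hc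
        have hends := hsupp a ha
        rcases (hspec_end a ha hc).1 with h1 | h1
        · -- a.1 = v0 : then look at a.2
          rcases (hspec_end a ha hc).2 with h2 | h2
          · exact hloopAs' a ha (h1.trans h2.symm)
          · exact hCaseA a.2 hends.2 h2
        · exact hCaseA a.1 hends.1 h1
      have hV'sub : Vs' ⊆ Vs := by
        intro x hx
        rcases Finset.mem_union.1 (hV hx) with h | h
        · exact h
        · exact absurd (List.mem_toFinset.1 h) (hCaseA x hx)
      exact ih Vs' As' hV'sub hA'sub hsupp hne hconn
    · push_neg at hCaseA
      obtain ⟨w, hwVs', hwl⟩ := hCaseA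
      by_cases hv0V : v0 ∈ Vs'
      · -- the subdigraph meets both sides, attached at v0
        set A'o := As'.filter (fun a => a.1 ∈ Vs ∧ a.2 ∈ Vs) with hA'o_def
        set B_e := As'.filter (fun a => ¬(a.1 ∈ Vs ∧ a.2 ∈ Vs)) with hBe_def
        have hA'o_sub : A'o ⊆ As := by
          intro a ha
          rw [hA'o_def, Finset.mem_filter] at ha
          by_contra hc
          rcases (hspec_end a ha.1 hc).1 with h1 | h1
          · rcases (hspec_end a ha.1 hc).2 with h2 | h2
            · exact hloopAs' a ha.1 (h1.trans h2.symm)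
            · exact hdisj _ h2 ha.2.2
          · exact hdisj _ h1 ha.2.1
        have hBe_sub : ∀ a ∈ B_e, a ∈ E ∨ a = (v0, hd) ∨ a = (hd, v0) ∨ a = e := by
          intro a ha
          rw [hBe_def, Finset.mem_filter] at ha
          rcases hclass a ha.1 with h | h
          · exact absurd ⟨(hwfold a h).1, (hwfold a h).2.1⟩ ha.2
          · exact h
        have hBe_ends : ∀ a ∈ B_e, (a.1 = v0 ∨ a.1 ∈ l) ∧ (a.2 = v0 ∨ a.2 ∈ l) := by
          intro a ha
          rw [hBe_def, Finset.mem_filter] at ha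
          refine hspec_end a ha.1 (fun hc => ha.2 ⟨(hwfold a hc).1, (hwfold a hc).2.1⟩)
        set S2 : Finset ℕ := insert v0 l.toFinset with hS2def
        have hsplitA : ∀ a ∈ As', (a.1 ∈ Vs ∧ a.2 ∈ Vs) ∨ (a.1 ∈ S2 ∧ a.2 ∈ S2) := by
          intro a ha
          by_cases hc : a ∈ As
          · exact Or.inl ⟨(hwfold a hc).1, (hwfold a hc).2.1⟩
          · right
            have := hspec_end a ha hc
            constructor <;> rw [hS2def, Finset.mem_insert, List.mem_toFinset] <;> tauto
        have hIA : ∀ x, x ∈ Vs → x ∈ S2 → x = v0 := by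
          intro x h1 h2
          rw [hS2def, Finset.mem_insert, List.mem_toFinset] at h2
          rcases h2 with h2 | h2
          · exact h2
          · exact absurd h1 (hdisj x h2)
        have hIS : ∀ x, x ∈ S2 → x ∈ Vs → x = v0 := fun x h1 h2 => hIA x h2 h1
        have hv0S2 : v0 ∈ S2 := by simp [hS2def]
        set V'o := Vs' ∩ Vs with hV'o_def
        have hv0V'o : v0 ∈ V'o := Finset.mem_inter.2 ⟨hv0V, hv0⟩
        have hconn_o : WeaklyConnectedOn V'o A'o := by
          intro x hx y hy
          rw [hV'o_def, Finset.mem_inter] at hx hy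
          have := (rtg_cross hsplitA hIA hv0 (hconn x hx.1 y hy.1) hy.2).1 hx.2
          exact this
        have hsupp_o : ∀ a ∈ A'o, a.1 ∈ V'o ∧ a.2 ∈ V'o := by
          intro a ha
          rw [hA'o_def, Finset.mem_filter] at ha
          rcases hsupp a ha.1 with ⟨h1, h2⟩
          exact ⟨Finset.mem_inter.2 ⟨h1, ha.2.1⟩, Finset.mem_inter.2 ⟨h2, ha.2.2⟩⟩
        obtain ⟨MA, hMAsub, hMAoct⟩ := ih V'o A'o Finset.inter_subset_right hA'o_sub
          hsupp_o ⟨v0, hv0V'o⟩ hconn_o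
        -- the ear part
        set W_e := insert v0 (Vs' ∩ l.toFinset) with hWe_def
        have hWe_Vs' : ∀ x ∈ W_e, x ∈ Vs' := by
          intro x hx
          rw [hWe_def, Finset.mem_insert] at hx
          rcases hx with h | h
          · exact h ▸ hv0V
          · exact (Finset.mem_inter.1 h).1
        have hsupp_e : ∀ a ∈ B_e, a.1 ∈ W_e ∧ a.2 ∈ W_e := by
          intro a ha
          have haAs' : a ∈ As' := by rw [hBe_def, Finset.mem_filter] at ha; exact ha.1
          rcases hsupp a haAs' with ⟨h1, h2⟩
          rcases hBe_ends a ha with ⟨e1, e2⟩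
          constructor <;> rw [hWe_def, Finset.mem_insert]
          · rcases e1 with h | h
            · exact Or.inl h
            · exact Or.inr (Finset.mem_inter.2 ⟨h1, List.mem_toFinset.2 h⟩)
          · rcases e2 with h | h
            · exact Or.inl h
            · exact Or.inr (Finset.mem_inter.2 ⟨h2, List.mem_toFinset.2 h⟩)
        have hconn_e : ∀ x ∈ W_e, ∀ y ∈ W_e, Relation.ReflTransGen (relOf B_e) x y := by
          intro x hx y hy
          have hxS2 : x ∈ S2 := by
            rw [hWe_def, Finset.mem_insert] at hx
            rw [hS2def, Finset.mem_insert]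
            rcases hx with h | h
            · exact Or.inl h
            · exact Or.inr (Finset.mem_inter.1 h).2
          have hyS2 : y ∈ S2 := by
            rw [hWe_def, Finset.mem_insert] at hy
            rw [hS2def, Finset.mem_insert]
            rcases hy with h | h
            · exact Or.inl h
            · exact Or.inr (Finset.mem_inter.1 h).2
          have hw := (rtg_cross (fun a ha => (hsplitA a ha).symm) hIS hv0S2
            (hconn x (hWe_Vs' x hx) y (hWe_Vs' y hy)) hyS2).1 hxS2
          refine relOf_mono ?_ hw
          intro a ha
          rw [Finset.mem_filter] at ha
          rw [hBe_def, Finset.mem_filter]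
          refine ⟨ha.1, fun hc => ?_⟩
          exact hloopAs' a ha.1 ((hIS _ ha.2.1 hc.1).trans (hIS _ ha.2.2 hc.2).symm)
        -- full cycle or not
        by_cases hfull : ∀ p ∈ pr (v0 :: (l ++ [v0])), p ∈ B_e ∨ p.swap ∈ B_e
        · -- add the whole ear
          have hlsub : ∀ x ∈ l, x ∈ Vs' := by
            intro x hx
            have hxv0 : x ≠ v0 := fun hc => hv0l (hc ▸ hx)
            have hxc : x ∈ v0 :: (l ++ [v0]) := by simp [hx]
            obtain ⟨y, hy⟩ := exists_pred hxc (by simp) (by simpa using hxv0)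
            rcases hfull _ hy with hmem | hmem <;>
              rw [hBe_def, Finset.mem_filter] at hmem
            · exact (hsupp _ hmem.1).2
            · exact (hsupp _ hmem.1).1
          refine ⟨MA ∪ E ∪ {(v0, hd), (hd, v0), e}, ?_, ?_⟩
          · intro a ha
            simp only [Finset.mem_union, Finset.mem_insert, Finset.mem_singleton]
            by_cases hc : a.1 ∈ Vs ∧ a.2 ∈ Vs
            · exact Or.inl (Or.inl (hMAsub (by rw [hA'o_def, Finset.mem_filter]; exact ⟨ha, hc⟩)))
            · have := hBe_sub a (by rw [hBe_def, Finset.mem_filter]; exact ⟨ha, hc⟩)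
              tauto
          · have hear := IsMaximalOctus.ear V'o MA v0 l E e hMAoct hv0V'o hlne hnd
              (fun x hx hc => hdisj x hx (Finset.mem_inter.1 hc).2) hE he
            have hVeq : V'o ∪ l.toFinset = Vs' := by
              ext x
              simp only [Finset.mem_union, hV'o_def, Finset.mem_inter, List.mem_toFinset]
              constructor
              · rintro (⟨h1, _⟩ | h)
                · exact h1
                · exact hlsub x h
              · intro hx
                rcases Finset.mem_union.1 (hV hx) with h | h
                · exact Or.inl ⟨hx, h⟩
                · exact Or.inr (List.mem_toFinset.1 h)
            rw [hVeq] at hear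
            exact hear
        · -- cut the cycle at a missing edge
          push_neg at hfull
          obtain ⟨p, hpc, hpB, hpsB⟩ := hfull
          obtain ⟨u, v, huv⟩ := mem_pr_iff.1 hpc
          -- split the cycle
          have hm1c : (u ++ [p.1]) <+: (v0 :: (l ++ [v0])) := ⟨p.2 :: v, by rw [huv]; simp⟩
          have hvlc : (v0 :: l) <+: (v0 :: (l ++ [v0])) := ⟨[v0], by simp⟩
          have hm1pre : (u ++ [p.1]) <+: (v0 :: l) :=
            List.prefix_of_prefix_length_le hm1c hvlc (by
              have hlen := congrArg List.length huv
              simp at hlen ⊢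
              omega)
          obtain ⟨X, hX⟩ : ∃ X, u ++ [p.1] = v0 :: X := by
            obtain ⟨t, ht⟩ := hm1pre
            cases u with
            | nil =>
              simp only [List.nil_append] at ht ⊢
              refine ⟨[], ?_⟩
              have : p.1 = v0 := by
                have := congrArg (fun s => List.head? s) ht
                simpa using this
              rw [this]
            | cons a u' =>
              have : a = v0 := by
                have := congrArg (fun s => List.head? s) ht
                simpa using this
              exact ⟨u' ++ [p.1], by rw [this]; simp⟩
          obtain ⟨Y, hXY⟩ : ∃ Y, l = X ++ Y := by
            have := hX ▸ hm1pre
            rw [List.cons_prefix_cons] at this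
            obtain ⟨t, ht⟩ := this.2
            exact ⟨t, ht.symm⟩
          have hc_eq : (v0 :: X) ++ (p.2 :: v) = (v0 :: X) ++ (Y ++ [v0]) := by
            have h1 : v0 :: (l ++ [v0]) = (u ++ [p.1]) ++ (p.2 :: v) := by
              rw [huv]; simp
            rw [hX] at h1
            rw [← h1, hXY]
            simp
          have hYv : p.2 :: v = Y ++ [v0] := List.append_cancel_left hc_eq
          have hXne_or : X ≠ [] ∨ X = [] := (ne_or_eq X [])
          have hp1 : p.1 = (v0 :: X).getLast (by simp) :=
            ((getLast_eq' hX.symm (by simp) (by simp)).trans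
              (getLast_append_singleton' u p.1)).symm
          have hp2 : p.2 = (Y ++ [v0]).head (by simp) :=
            (head_eq' hYv.symm (by simp) (by simp)).symm
          -- edges of B_e are edges of (Y ++ v0 :: X)
          set L := Y ++ v0 :: X with hLdef
          have hprl_sub : ∀ q : ℕ × ℕ, q ∈ pr l → q = p ∨ q ∈ pr L := by
            intro q hq
            rw [hXY] at hq
            rcases pr_append hq with h | h | ⟨hA1, hB1, he1⟩
            · exact Or.inr (pr_append_left (C := Y) (pr_append_left (C := [v0]) h))
            · exact Or.inr (pr_append_right h)
            · left
              have e1 : q.1 = p.1 := by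
                rw [hp1, List.getLast_cons hA1]
                exact congrArg Prod.fst he1
              have e2 : q.2 = p.2 := by
                rw [hp2, List.head_append_of_ne_nil hB1]
                exact congrArg Prod.snd he1
              exact Prod.ext e1 e2
          have hnotp : ∀ b ∈ B_e, b ≠ p ∧ b ≠ p.swap := by
            intro b hb
            constructor
            · rintro rfl; exact hpB hb
            · intro hc
              exact hpsB (by rw [← hc] at *; simpa using hb)
          have hBeL : ∀ b ∈ B_e, b ∈ pr L ∨ b.swap ∈ pr L := by
            intro b hb
            obtain ⟨hbp, hbps⟩ := hnotp b hb
            rcases hBe_sub b hb with hbE | hbs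
            · rcases hE.1 b hbE with h | h
              · rcases hprl_sub b (pr_eq_zip l ▸ h) with h1 | h1
                · exact absurd h1 hbp
                · exact Or.inl h1
              · rcases hprl_sub b.swap (pr_eq_zip l ▸ h) with h1 | h1
                · exact absurd (by rw [← h1]; simp) hbps
                · exact Or.inr h1
            · -- special arcs
              rcases hbs with hb1 | hb1 | hb1
              · -- b = (v0, hd)
                cases hXne_or with
                | inl hXne =>
                  have hhdX : hd = X.head hXne := by
                    rw [hhd_def]
                    exact (head_eq' hXY hlne (by simp [hXne])).trans
                      (List.head_append_of_ne_nil hXne)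
                  have : (v0, hd) ∈ pr (v0 :: X) := by
                    refine mem_pr_iff.2 ⟨[], X.tail, ?_⟩
                    simp only [List.nil_append]
                    rw [hhdX, List.cons_head_tail]
                  exact Or.inl (by rw [hb1]; exact pr_append_left this)
                | inr hXe =>
                  exfalso
                  have hYne : Y ≠ [] := by
                    rw [hXY, hXe] at hlne
                    simpa using hlne
                  have hlY : l = Y := by rw [hXY, hXe, List.nil_append]
                  have hpv : p = (v0, hd) := by
                    have e1 : p.1 = v0 := by
                      rw [hp1]
                      exact getLast_eq' (show v0 :: X = [v0] by rw [hXe]) (by simp) (by simp)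
                    have e2 : p.2 = hd := by
                      rw [hp2, hhd_def]
                      exact (List.head_append_of_ne_nil hYne).trans
                        (head_eq' hlY.symm hYne hlne)
                    exact Prod.ext e1 e2
                  exact hbp (hb1.trans hpv.symm)
              · -- b = (hd, v0)
                cases hXne_or with
                | inl hXne =>
                  have hhdX : hd = X.head hXne := by
                    rw [hhd_def]
                    exact (head_eq' hXY hlne (by simp [hXne])).trans
                      (List.head_append_of_ne_nil hXne)
                  have : (v0, hd) ∈ pr (v0 :: X) := by
                    refine mem_pr_iff.2 ⟨[], X.tail, ?_⟩
                    simp only [List.nil_append]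
                    rw [hhdX, List.cons_head_tail]
                  exact Or.inr (by rw [hb1]; exact pr_append_left this)
                | inr hXe =>
                  exfalso
                  have hYne : Y ≠ [] := by
                    rw [hXY, hXe] at hlne
                    simpa using hlne
                  have hlY : l = Y := by rw [hXY, hXe, List.nil_append]
                  have hpv : p = (v0, hd) := by
                    have e1 : p.1 = v0 := by
                      rw [hp1]
                      exact getLast_eq' (show v0 :: X = [v0] by rw [hXe]) (by simp) (by simp)
                    have e2 : p.2 = hd := by
                      rw [hp2, hhd_def]
                      exact (List.head_append_of_ne_nil hYne).trans
                        (head_eq' hlY.symm hYne hlne)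
                    exact Prod.ext e1 e2
                  exact hbps (by rw [hb1, hpv]; rfl)
              · -- b = e
                rcases (ne_or_eq Y []) with hYne | hYe
                · have hlastY : l.getLast hlne = Y.getLast hYne :=
                    (getLast_eq' hXY hlne (by simp [hYne])).trans
                      (List.getLast_append_of_ne_nil _ hYne)
                  have hmem : (Y.getLast hYne, v0) ∈ pr L := by
                    refine mem_pr_iff.2 ⟨Y.dropLast, X, ?_⟩
                    rw [hLdef]
                    conv_lhs => rw [← List.dropLast_append_getLast hYne]
                    simp
                  rcases he with he' | he'
                  · exact Or.inr (by rw [hb1, he', hlastY]; exact hmem)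
                  · exact Or.inl (by rw [hb1, he', hlastY]; exact hmem)
                · exfalso
                  have hXne : X ≠ [] := by
                    rw [hXY, hYe] at hlne
                    simpa using hlne
                  have hlX : l = X := by rw [hXY, hYe, List.append_nil]
                  have hpv : p = (l.getLast hlne, v0) := by
                    have e2 : p.2 = v0 := by
                      rw [hp2]
                      exact head_eq' (show Y ++ [v0] = [v0] by rw [hYe]; rfl) (by simp) (by simp)
                    have e1 : p.1 = l.getLast hlne := by
                      rw [hp1]
                      exact ((List.getLast_cons hXne).trans
                        (getLast_eq' hlX hlne hXne).symm)
                    exact Prod.ext e1 e2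
                  rcases he with he' | he' <;> rw [he'] at hb1
                  · exact hbps (by rw [hb1, hpv]; rfl)
                  · exact hbp (hb1.trans hpv.symm)
          -- apply glue2
          have hndglue : (v0 :: (X ++ Y)).Nodup := by rw [← hXY]; exact hndc
          have hW_e : ∀ x ∈ W_e, x = v0 ∨ x ∈ X ∨ x ∈ Y := by
            intro x hx
            rw [hWe_def, Finset.mem_insert] at hx
            rcases hx with h | h
            · exact Or.inl h
            · have := (Finset.mem_inter.1 h).2
              rw [List.mem_toFinset, hXY, List.mem_append] at this
              exact Or.inr this
          have hloopBe : ∀ b ∈ B_e, b.1 ≠ b.2 := by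
            intro b hb
            rw [hBe_def, Finset.mem_filter] at hb
            exact hloopAs' b hb.1
          have hv0We : v0 ∈ W_e := by rw [hWe_def]; exact Finset.mem_insert_self _ _
          obtain ⟨B'', hsubB, hoctB⟩ := glue2 X Y v0 hndglue W_e B_e hBeL hloopBe
            hsupp_e hv0We hW_e hconn_e V'o MA hMAoct hv0V'o
            (fun x hx hc => by
              have hxl : x ∈ l := by rw [hXY, List.mem_append]; exact hx
              exact hdisj x hxl (Finset.mem_inter.1 hc).2)
          refine ⟨MA ∪ B'', ?_, ?_⟩
          · intro a ha
            by_cases hc : a.1 ∈ Vs ∧ a.2 ∈ Vs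
            · exact Finset.mem_union_left _ (hMAsub (by rw [hA'o_def, Finset.mem_filter]; exact ⟨ha, hc⟩))
            · exact Finset.mem_union_right _ (hsubB (by rw [hBe_def, Finset.mem_filter]; exact ⟨ha, hc⟩))
          · have hVeq : V'o ∪ W_e.erase v0 = Vs' := by
              ext x
              simp only [Finset.mem_union, Finset.mem_erase, hV'o_def, Finset.mem_inter,
                hWe_def, Finset.mem_insert, List.mem_toFinset]
              constructor
              · rintro (⟨h1, _⟩ | ⟨h1, h2⟩)
                · exact h1
                · rcases h2 with h2 | h2
                  · exact absurd h2 h1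
                  · exact h2.1
              · intro hx
                rcases Finset.mem_union.1 (hV hx) with h | h
                · exact Or.inl ⟨hx, h⟩
                · by_cases hxv : x = v0
                  · exact Or.inl ⟨hx, hxv ▸ hv0⟩
                  · exact Or.inr ⟨hxv, Or.inr ⟨hx, List.mem_toFinset.1 h⟩⟩
            rw [hVeq] at hoctB
            exact hoctB
      · -- v0 ∉ Vs' : the subdigraph lies inside the ear path
        have hnospec : ∀ a ∈ As', a ∈ As ∨ a ∈ E := by
          intro a ha
          rcases hclass a ha with h | h
          · exact Or.inl h
          · rcases h with h | h | h | h
            · exact Or.inr h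
            · exact absurd ((hsupp a ha).1) (by rw [h]; exact fun hc => hv0V hc)
            · exact absurd ((hsupp a ha).2) (by rw [h]; exact fun hc => hv0V hc)
            · subst h
              rcases he with he' | he' <;> rw [he'] at ha
              · exact absurd ((hsupp _ ha).1) (fun hc => hv0V hc)
              · exact absurd ((hsupp _ ha).2) (fun hc => hv0V hc)
        have hsplitB : ∀ a ∈ As', (a.1 ∈ Vs ∧ a.2 ∈ Vs) ∨
            (a.1 ∈ l.toFinset ∧ a.2 ∈ l.toFinset) := by
          intro a ha
          rcases hnospec a ha with h | h
          · exact Or.inl ⟨(hwfold a h).1, (hwfold a h).2.1⟩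
          · have := hEl a h
            exact Or.inr ⟨List.mem_toFinset.2 this.1, List.mem_toFinset.2 this.2⟩
        have hnoVs : ∀ x ∈ Vs', x ∉ Vs := by
          intro x hx hxVs
          have hwalk := hconn x hx w hwVs'
          have : w ∈ (Vs : Finset ℕ) := rtg_sep hsplitB
            (fun y h1 h2 => hdisj y (List.mem_toFinset.1 h2) h1) hwalk hxVs
          exact hdisj w hwl this
        have hA'E : As' ⊆ E := by
          intro a ha
          rcases hnospec a ha with h | h
          · exact absurd (hwfold a h).1 (hnoVs a.1 (hsupp a ha).1)
          · exact h
        have hV'l : ∀ x ∈ Vs', x ∈ l := by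
          intro x hx
          rcases Finset.mem_union.1 (hV hx) with h | h
          · exact absurd h (hnoVs x hx)
          · exact List.mem_toFinset.1 h
        obtain ⟨X', Y', hsplitl⟩ := List.append_of_mem hwl
        have hndw : (w :: (X' ++ Y')).Nodup := by
          rw [← List.nodup_middle, ← hsplitl]
          exact hnd
        have hndw2 : (w :: (Y' ++ X')).Nodup := by
          rw [List.nodup_cons] at hndw ⊢
          exact ⟨by simpa [or_comm] using hndw.1, List.perm_append_comm.nodup_iff.1 hndw.2⟩
        have hwsingle : IsMaximalOctus {w} ∅ := IsMaximalOctus.single w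
        obtain ⟨B'', hsubB, hoctB⟩ := glue2 Y' X' w hndw2 Vs' As'
          (fun b hb => by
            have := hE.1 b (hA'E hb)
            rw [pr_eq_zip, hsplitl] at this
            exact this)
          hloopAs' hsupp hwVs'
          (fun x hx => by
            have := hV'l x hx
            rw [hsplitl, List.mem_append, List.mem_cons] at this
            tauto)
          hconn {w} ∅ hwsingle (Finset.mem_singleton_self w)
          (fun x hx hc => by
            rw [Finset.mem_singleton] at hc
            subst hc
            rw [List.nodup_cons] at hndw
            exact hndw.1 (by rw [List.mem_append]; tauto))
        have hVeq : {w} ∪ Vs'.erase w = Vs' := by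
          ext x
          simp only [Finset.mem_union, Finset.mem_singleton, Finset.mem_erase]
          constructor
          · rintro (h | ⟨_, h⟩)
            · exact h ▸ hwVs'
            · exact h
          · intro hx
            by_cases hc : x = w
            · exact Or.inl hc
            · exact Or.inr ⟨hc, hx⟩
        rw [hVeq] at hoctB
        refine ⟨B'', hsubB, by simpa using hoctB⟩
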